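/- arXiv:2101.12648 — 2 statements merged into one kernel-verified Lean document; each statement's English description precedes it below -/
import Mathlib

section
/- For positive reals $q_1,\dots,q_n$, $p_1,\dots,p_n$ and $r>0$ with $\sum_i p_i > r$, one has the integral identity $\int_0^\infty \cdots \int_0^\infty \prod_{i=1}^n dt_i\, e^{-\sum_i q_i t_i} \frac{\prod_i t_i^{p_i-1}}{(\sum_i t_i)^r} = \frac{\prod_i \Gamma(p_i)}{\Gamma(r)} \int_0^\infty dx\, \frac{x^{r-1}}{\prod_i (x+q_i)^{p_i}}$. -/
open MeasureTheory Real Set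

/-!
Schwinger's trick: for `s > 0`, `s ^ (-r) = Γ(r)⁻¹ ∫₀^∞ x ^ (r - 1) e ^ (-s x) dx`. Applying it
to `s = ∑ tᵢ` and exchanging the order of integration, the integrand in `t` becomes
`∏ tᵢ ^ (pᵢ - 1) e ^ (-(x + qᵢ) tᵢ)`, whose integral over the positive orthant factorizes into
the Gamma integrals `Γ(pᵢ) / (x + qᵢ) ^ pᵢ`. Everything is done with lower Lebesgue integrals,
where Tonelli's theorem holds unconditionally; the Bochner integrals are their real parts.
-/

section PiProd

variable {E : Type*} [MeasurableSpace E]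

theorem lintegral_fin_nat_prod_eq_prod {n : ℕ} {μ : Fin n → Measure E} [∀ i, SigmaFinite (μ i)]
    {f : Fin n → E → ENNReal} (hf : ∀ i, Measurable (f i)) :
    ∫⁻ x, ∏ i, f i (x i) ∂Measure.pi μ = ∏ i, ∫⁻ x, f i x ∂μ i := by
  induction n with
  | zero => simp
  | succ n ih =>
    have hg : Measurable fun y : Fin n → E ↦ ∏ i, f i.succ (y i) :=
      Finset.measurable_prod _ fun i _ ↦ (hf i.succ).comp (measurable_pi_apply i)
    calc
      _ = ∫⁻ x : E × (Fin n → E), f 0 x.1 * ∏ i : Fin n, f i.succ (x.2 i)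
            ∂(μ 0).prod (Measure.pi fun i ↦ μ i.succ) := by
        rw [← (measurePreserving_piFinSuccAbove μ 0).symm.lintegral_comp (by fun_prop)]
        simp_rw [MeasurableEquiv.piFinSuccAbove_symm_apply, Fin.insertNthEquiv,
          Fin.prod_univ_succ, Fin.insertNth_zero, Equiv.coe_fn_mk, Fin.cons_succ,
          Fin.zero_succAbove, cast_eq, Fin.cons_zero]
      _ = ∏ i, ∫⁻ x, f i x ∂μ i := by
        rw [lintegral_prod_mul (hf 0).aemeasurable hg.aemeasurable, ih fun i ↦ hf i.succ,
          Fin.prod_univ_succ]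

variable {ι : Type*} [Fintype ι] {μ : ι → Measure E} [∀ i, SigmaFinite (μ i)]
  {f : ι → E → ENNReal}

theorem lintegral_fintype_prod_eq_prod (hf : ∀ i, Measurable (f i)) :
    ∫⁻ x, ∏ i, f i (x i) ∂Measure.pi μ = ∏ i, ∫⁻ x, f i x ∂μ i := by
  let e := (Fintype.equivFin ι).symm
  rw [← (measurePreserving_piCongrLeft μ e).lintegral_comp (by fun_prop)]
  simp_rw [← e.prod_comp, MeasurableEquiv.coe_piCongrLeft, Equiv.piCongrLeft_apply_apply]
  exact lintegral_fin_nat_prod_eq_prod fun i ↦ hf (e i)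

theorem setLIntegral_univ_pi_prod_eq_prod (hf : ∀ i, Measurable (f i)) (s : ι → Set E) :
    ∫⁻ x in univ.pi s, ∏ i, f i (x i) ∂Measure.pi μ = ∏ i, ∫⁻ x in s i, f i x ∂μ i := by
  rw [Measure.restrict_pi_pi]
  exact lintegral_fintype_prod_eq_prod hf

end PiProd

theorem lintegral_rpow_mul_exp_neg_mul_Ioi {a b : ℝ} (ha : 0 < a) (hb : 0 < b) :
    ∫⁻ t in Ioi 0, ENNReal.ofReal (t ^ (a - 1) * exp (-(b * t))) =
      ENNReal.ofReal (Gamma a / b ^ a) := by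
  have hint : IntegrableOn (fun t : ℝ ↦ t ^ (a - 1) * exp (-(b * t))) (Ioi 0) := by
    simpa using integrableOn_rpow_mul_exp_neg_mul_rpow (p := 1) (by linarith) one_pos hb
  have hnonneg : 0 ≤ᵐ[volume.restrict (Ioi 0)] fun t : ℝ ↦ t ^ (a - 1) * exp (-(b * t)) := by
    filter_upwards [ae_restrict_mem measurableSet_Ioi] with t (ht : 0 < t)
    positivity
  rw [← ofReal_integral_eq_lintegral_ofReal hint hnonneg, integral_rpow_mul_exp_neg_mul_Ioi ha hb,
    one_div, inv_rpow hb.le, inv_mul_eq_div]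

theorem ofReal_div_rpow_eq_lintegral {A r s : ℝ} (hr : 0 < r) (hs : 0 < s) :
    ENNReal.ofReal (A / s ^ r) =
      ∫⁻ x in Ioi 0,
        ENNReal.ofReal (x ^ (r - 1) * exp (-(s * x))) * ENNReal.ofReal (A / Gamma r) := by
  rw [lintegral_mul_const' _ _ ENNReal.ofReal_ne_top, lintegral_rpow_mul_exp_neg_mul_Ioi hr hs,
    ← ENNReal.ofReal_mul (by positivity)]
  congr 1
  field_simp

theorem setLIntegral_pi_Ioi_prod_rpow_mul_exp_neg_mul {ι : Type*} [Fintype ι] {a b : ι → ℝ}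
    (ha : ∀ i, 0 < a i) (hb : ∀ i, 0 < b i) :
    ∫⁻ t in univ.pi fun _ ↦ Ioi 0, ENNReal.ofReal (∏ i, t i ^ (a i - 1) * exp (-(b i * t i))) =
      ENNReal.ofReal (∏ i, Gamma (a i) / b i ^ a i) := by
  calc
    _ = ∫⁻ t in univ.pi fun _ ↦ Ioi 0,
          ∏ i, ENNReal.ofReal (t i ^ (a i - 1) * exp (-(b i * t i))) := by
      refine setLIntegral_congr_fun (MeasurableSet.univ_pi fun _ ↦ measurableSet_Ioi)
        fun t ht ↦ ?_
      exact ENNReal.ofReal_prod_of_nonneg fun i _ ↦ by have : 0 < t i := ht i trivial; positivity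
    _ = ∏ i, ENNReal.ofReal (Gamma (a i) / b i ^ a i) := by
      rw [volume_pi, setLIntegral_univ_pi_prod_eq_prod
        (f := fun i s ↦ ENNReal.ofReal (s ^ (a i - 1) * exp (-(b i * s)))) (by fun_prop)]
      exact Finset.prod_congr rfl fun i _ ↦ lintegral_rpow_mul_exp_neg_mul_Ioi (ha i) (hb i)
    _ = _ := (ENNReal.ofReal_prod_of_nonneg fun i _ ↦ by have := ha i; have := hb i; positivity).symm

section Schwinger

variable {ι : Type*} [Fintype ι] {q p : ι → ℝ} {r : ℝ}

theorem setLIntegral_pi_Ioi_schwinger_integrand (hq : ∀ i, 0 < q i) (hp : ∀ i, 0 < p i)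
    (hr : 0 < r) {x : ℝ} (hx : 0 < x) :
    ∫⁻ t in univ.pi fun _ ↦ Ioi 0,
        ENNReal.ofReal (x ^ (r - 1) * exp (-((∑ i, t i) * x))) *
          ENNReal.ofReal (exp (-∑ i, q i * t i) * (∏ i, t i ^ (p i - 1)) / Gamma r) =
      ENNReal.ofReal ((∏ i, Gamma (p i)) / Gamma r) *
        ENNReal.ofReal (x ^ (r - 1) / ∏ i, (x + q i) ^ p i) := by
  have hΓ : 0 < Gamma r := Gamma_pos_of_pos hr
  have hΓp : 0 ≤ ∏ i, Gamma (p i) := Finset.prod_nonneg fun i _ ↦ (Gamma_pos_of_pos (hp i)).le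
  have hfactor (t : ι → ℝ) :
      x ^ (r - 1) * exp (-((∑ i, t i) * x)) * (exp (-∑ i, q i * t i) * (∏ i, t i ^ (p i - 1)) /
        Gamma r) = x ^ (r - 1) / Gamma r * ∏ i, t i ^ (p i - 1) * exp (-((x + q i) * t i)) := by
    have hexp : ∑ i, -((x + q i) * t i) = -((∑ i, t i) * x) + -∑ i, q i * t i := by
      simp only [Finset.sum_mul, ← Finset.sum_neg_distrib, ← Finset.sum_add_distrib]
      exact Finset.sum_congr rfl fun i _ ↦ by ring
    rw [Finset.prod_mul_distrib, ← exp_sum, hexp, exp_add]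
    ring
  calc
    _ = ∫⁻ t in univ.pi fun _ ↦ Ioi 0, ENNReal.ofReal (x ^ (r - 1) / Gamma r) *
          ENNReal.ofReal (∏ i, t i ^ (p i - 1) * exp (-((x + q i) * t i))) := by
      refine lintegral_congr fun t ↦ ?_
      rw [← ENNReal.ofReal_mul (by positivity), hfactor,
        ENNReal.ofReal_mul (div_nonneg (by positivity) hΓ.le)]
    _ = _ := by
      rw [lintegral_const_mul' _ _ ENNReal.ofReal_ne_top,
        setLIntegral_pi_Ioi_prod_rpow_mul_exp_neg_mul hp fun i ↦ by linarith [hq i],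
        ← ENNReal.ofReal_mul (div_nonneg (by positivity) hΓ.le),
        ← ENNReal.ofReal_mul (div_nonneg hΓp hΓ.le)]
      congr 1
      rw [Finset.prod_div_distrib]
      ring

theorem setLIntegral_pi_Ioi_schwinger [Nonempty ι] (hq : ∀ i, 0 < q i) (hp : ∀ i, 0 < p i)
    (hr : 0 < r) :
    ∫⁻ t in univ.pi fun _ ↦ Ioi 0,
        ENNReal.ofReal (exp (-∑ i, q i * t i) * (∏ i, t i ^ (p i - 1)) / (∑ i, t i) ^ r) =
      ENNReal.ofReal ((∏ i, Gamma (p i)) / Gamma r) *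
        ∫⁻ x in Ioi 0, ENNReal.ofReal (x ^ (r - 1) / ∏ i, (x + q i) ^ p i) := by
  calc
    _ = ∫⁻ t in univ.pi fun _ ↦ Ioi 0, ∫⁻ x in Ioi 0,
          ENNReal.ofReal (x ^ (r - 1) * exp (-((∑ i, t i) * x))) *
            ENNReal.ofReal (exp (-∑ i, q i * t i) * (∏ i, t i ^ (p i - 1)) / Gamma r) := by
      refine setLIntegral_congr_fun (MeasurableSet.univ_pi fun _ ↦ measurableSet_Ioi)
        fun t ht ↦ ?_
      exact ofReal_div_rpow_eq_lintegral hr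
        (Finset.sum_pos (fun i _ ↦ ht i trivial) Finset.univ_nonempty)
    _ = ∫⁻ x in Ioi 0, ∫⁻ t in univ.pi fun _ ↦ Ioi 0,
          ENNReal.ofReal (x ^ (r - 1) * exp (-((∑ i, t i) * x))) *
            ENNReal.ofReal (exp (-∑ i, q i * t i) * (∏ i, t i ^ (p i - 1)) / Gamma r) :=
      lintegral_lintegral_swap (by fun_prop)
    _ = ∫⁻ x in Ioi 0, ENNReal.ofReal ((∏ i, Gamma (p i)) / Gamma r) *
          ENNReal.ofReal (x ^ (r - 1) / ∏ i, (x + q i) ^ p i) :=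
      setLIntegral_congr_fun measurableSet_Ioi fun x hx ↦
        setLIntegral_pi_Ioi_schwinger_integrand hq hp hr hx
    _ = _ := lintegral_const_mul' _ _ ENNReal.ofReal_ne_top

end Schwinger

theorem schwinger_parametrization_general (n : ℕ) (hn : 0 < n) (q p : Fin n → ℝ) (r : ℝ)
    (hq : ∀ i, 0 < q i) (hp : ∀ i, 0 < p i) (hr : 0 < r) :
    (∫ t in {t : Fin n → ℝ | ∀ i, 0 < t i},
        Real.exp (-∑ i, q i * t i) * (∏ i, (t i) ^ (p i - 1)) / (∑ i, t i) ^ r)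
      = ((∏ i, Real.Gamma (p i)) / Real.Gamma r) *
        ∫ x in Set.Ioi (0 : ℝ), x ^ (r - 1) / ∏ i, (x + q i) ^ (p i) := by
  have : Nonempty (Fin n) := Fin.pos_iff_nonempty.mp hn
  have horthant : {t : Fin n → ℝ | ∀ i, 0 < t i} = univ.pi fun _ ↦ Ioi 0 := by
    ext t
    simp
  have hΓ : 0 ≤ (∏ i, Gamma (p i)) / Gamma r :=
    div_nonneg (Finset.prod_nonneg fun i _ ↦ (Gamma_pos_of_pos (hp i)).le) (Gamma_pos_of_pos hr).le
  rw [horthant,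
    integral_eq_lintegral_of_nonneg_ae ?nonneg_t (by fun_prop : Measurable _).aestronglyMeasurable,
    integral_eq_lintegral_of_nonneg_ae ?nonneg_x (by fun_prop : Measurable _).aestronglyMeasurable,
    setLIntegral_pi_Ioi_schwinger hq hp hr, ENNReal.toReal_mul, ENNReal.toReal_ofReal hΓ]
  case nonneg_t =>
    filter_upwards [ae_restrict_mem (MeasurableSet.univ_pi fun _ ↦ measurableSet_Ioi)] with t ht
    have ht' (i : Fin n) : 0 ≤ t i := (ht i trivial).le
    exact div_nonneg
      (mul_nonneg (exp_pos _).le (Finset.prod_nonneg fun i _ ↦ rpow_nonneg (ht' i) _))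
      (rpow_nonneg (Finset.sum_nonneg fun i _ ↦ ht' i) _)
  case nonneg_x =>
    filter_upwards [ae_restrict_mem measurableSet_Ioi] with x (hx : 0 < x)
    exact div_nonneg (rpow_nonneg hx.le _)
      (Finset.prod_nonneg fun i _ ↦ rpow_nonneg (by linarith [hq i]) _)

/-- Generalized Feynman–Schwinger parametrization identity:
for positive `qᵢ`, `pᵢ` and `r > 0` with `∑ pᵢ > r`,
`∫ₜ e^{-∑ qᵢ tᵢ} (∏ tᵢ^{pᵢ-1}) / (∑ tᵢ)^r = (∏ Γ(pᵢ)/Γ(r)) ∫ₓ x^{r-1}/∏(x+qᵢ)^{pᵢ}`. -/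
theorem schwinger_parametrization (n : ℕ) (hn : 0 < n) (q p : Fin n → ℝ) (r : ℝ)
    (hq : ∀ i, 0 < q i) (hp : ∀ i, 0 < p i) (hr : 0 < r) (hsum : r < ∑ i, p i) :
    (∫ t in {t : Fin n → ℝ | ∀ i, 0 < t i},
        Real.exp (-∑ i, q i * t i) * (∏ i, (t i) ^ (p i - 1)) / (∑ i, t i) ^ r)
      = ((∏ i, Real.Gamma (p i)) / Real.Gamma r) *
        ∫ x in Set.Ioi (0 : ℝ), x ^ (r - 1) / ∏ i, (x + q i) ^ (p i) :=
  schwinger_parametrization_general n hn q p r hq hp hr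
end

section
/- After applying the Schwinger parametrization identity, $\alpha_1 = \frac{1}{2(4\pi)^4} \cdot \frac{\Gamma(7/2)^2 \Gamma(3/2)^2}{\Gamma(4)} \int_0^\infty \prod_{i=1}^4 ds_i\, s_i \int_0^\infty dx\, \frac{x^3}{\prod_{i=1,2}(\frac{1}{4}s_i^2 + s_i + x)^{7/2} \prod_{i=3,4}(\frac{1}{4}s_i^2 + s_i + x)^{3/2}}$ equals $\frac{61}{645120\,\pi^2}$, where the exponents $7/2$ apply to $i=1,3$ and $3/2$ to $i=2,4$ (equivalently, by symmetry, to any pairing of two indices with $7/2$ and two with $3/2$). -/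
/-!
By Tonelli, the `s`-integral can be done first, and it factorizes into one-dimensional integrals
`∫₀^∞ s Q^{-a} ds` with `Q = s²/4 + s + x = (s/2 + 1)² + (x - 1)`. For half-integer `a` these are
elementary: writing `x = r²`, an antiderivative `P(s) Q^{1-a}` with `P` polynomial gives
`4 / (r + 1)` for `a = 3/2` and `4 (3r + 1) / (15 r³ (r + 1)³)` for `a = 7/2`. After the
substitution `x = r²` the remaining integral is `(512/225) ∫₀^∞ r (3r + 1)² / (r + 1)⁸ dr`
`= (512/225) (61/420)`, and `Γ(7/2) = 15√π/8`, `Γ(3/2) = √π/2`, `Γ(4) = 6` give the constant.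
-/

open MeasureTheory Real Set Filter Topology

noncomputable def schwingerQuad (x s : ℝ) : ℝ := 1 / 4 * s ^ 2 + s + x

namespace schwingerQuad

lemma pos {x s : ℝ} (hx : 0 < x) (hs : 0 ≤ s) : 0 < schwingerQuad x s := by
  unfold schwingerQuad; positivity

lemma hasDerivAt (x s : ℝ) : HasDerivAt (schwingerQuad x) (s / 2 + 1) s := by
  have h := (((hasDerivAt_pow 2 s).const_mul (1 / 4 : ℝ)).add (hasDerivAt_id s)).add_const x
  exact h.congr_deriv (by push_cast; ring)

lemma tendsto_atTop (x : ℝ) : Tendsto (schwingerQuad x) atTop atTop := by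
  refine tendsto_atTop_mono' atTop ?_ (tendsto_atTop_add_const_right _ x tendsto_id)
  filter_upwards [eventually_ge_atTop 0] with s hs
  unfold schwingerQuad; simp only [id]; nlinarith

lemma tendsto_rpow_neg_half (x : ℝ) :
    Tendsto (fun s => schwingerQuad x s ^ (-(1 / 2) : ℝ)) atTop (𝓝 0) :=
  (tendsto_rpow_neg_atTop (by norm_num)).comp (tendsto_atTop x)

/-- Since `(s/2 + 1)² = Q - (x - 1)`, the square of this function is `1 - (x - 1) / Q`. -/
lemma tendsto_mul_rpow_neg_half (x : ℝ) :
    Tendsto (fun s => (s / 2 + 1) * schwingerQuad x s ^ (-(1 / 2) : ℝ)) atTop (𝓝 1) := by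
  have h : Tendsto (fun s => (1 - (x - 1) * (schwingerQuad x s)⁻¹) ^ (1 / 2 : ℝ)) atTop
      (𝓝 ((1 - (x - 1) * 0) ^ (1 / 2 : ℝ))) :=
    (((tendsto_inv_atTop_zero.comp (tendsto_atTop x)).const_mul _).const_sub _).rpow_const
      (Or.inr (by norm_num))
  rw [mul_zero, sub_zero, one_rpow] at h
  refine h.congr' ?_
  filter_upwards [eventually_ge_atTop 0, (tendsto_atTop x).eventually_gt_atTop 0] with s hs hQ
  have ht : 0 ≤ s / 2 + 1 := by positivity
  have hsq : 1 - (x - 1) * (schwingerQuad x s)⁻¹ = (s / 2 + 1) ^ 2 / schwingerQuad x s := by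
    rw [eq_div_iff hQ.ne', sub_mul, mul_assoc, inv_mul_cancel₀ hQ.ne']
    unfold schwingerQuad; ring
  rw [hsq, div_rpow (by positivity) hQ.le, ← rpow_natCast, ← rpow_mul ht, rpow_neg hQ.le]
  norm_num [div_eq_mul_inv]

lemma mul_rpow_neg_half_sq {x s : ℝ} (hQ : 0 < schwingerQuad x s) :
    schwingerQuad x s * (schwingerQuad x s ^ (-(1 / 2) : ℝ)) ^ 2 = 1 := by
  rw [← rpow_natCast, ← rpow_mul hQ.le]
  norm_num [rpow_neg_one, hQ.ne']

end schwingerQuad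

lemma sq_rpow_neg_natCast_div_two {r : ℝ} (hr : 0 ≤ r) (k : ℕ) :
    (r ^ 2) ^ (-(k / 2) : ℝ) = (r ^ k)⁻¹ := by
  rw [← rpow_natCast r 2, ← rpow_mul hr, show ((2 : ℕ) : ℝ) * -(k / 2) = -k by ring,
    rpow_neg hr, rpow_natCast]

theorem integral_div_schwingerQuad_rpow_of_antideriv {x a L : ℝ} (hx : 0 < x)
    {P P' : ℝ → ℝ} (hP : ∀ s, HasDerivAt P (P' s) s)
    (hPP' : ∀ s, P' s * schwingerQuad x s + (1 - a) * (s / 2 + 1) * P s = s)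
    (hlim : Tendsto (fun s => P s * schwingerQuad x s ^ (1 - a)) atTop (𝓝 L)) :
    IntegrableOn (fun s => s / schwingerQuad x s ^ a) (Ioi 0) ∧
      ∫ s in Ioi 0, s / schwingerQuad x s ^ a = L - P 0 * x ^ (1 - a) := by
  have hderiv : ∀ s ∈ Ici (0 : ℝ), HasDerivAt (fun s => P s * schwingerQuad x s ^ (1 - a))
      (s / schwingerQuad x s ^ a) s := by
    intro s hs
    have hQ := schwingerQuad.pos hx hs
    refine ((hP s).mul ((schwingerQuad.hasDerivAt x s).rpow_const (Or.inl hQ.ne')))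
      |>.congr_deriv ?_
    have hQa : schwingerQuad x s ^ (1 - a) = schwingerQuad x s * schwingerQuad x s ^ (-a) := by
      rw [sub_eq_add_neg, rpow_add hQ, rpow_one]
    calc _ = (P' s * schwingerQuad x s + (1 - a) * (s / 2 + 1) * P s)
          * schwingerQuad x s ^ (-a) := by
          rw [sub_sub_cancel_left, hQa]; ring
      _ = _ := by rw [hPP', rpow_neg hQ.le, div_eq_mul_inv]
  have hnonneg : ∀ s ∈ Ioi (0 : ℝ), 0 ≤ s / schwingerQuad x s ^ a := fun s hs =>
    div_nonneg (le_of_lt hs) (rpow_nonneg (schwingerQuad.pos hx (le_of_lt hs)).le _)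
  refine ⟨integrableOn_Ioi_deriv_of_nonneg' hderiv hnonneg hlim, ?_⟩
  rw [integral_Ioi_of_hasDerivAt_of_nonneg' hderiv hnonneg hlim]
  simp [schwingerQuad]

theorem integral_div_schwingerQuad_rpow_three_halves {r : ℝ} (hr : 0 < r) (hr1 : r ≠ 1) :
    IntegrableOn (fun s => s / schwingerQuad (r ^ 2) s ^ ((3 : ℝ) / 2)) (Ioi 0) ∧
      ∫ s in Ioi 0, s / schwingerQuad (r ^ 2) s ^ ((3 : ℝ) / 2) = 4 / (r + 1) := by
  have hc : r ^ 2 - 1 ≠ 0 := fun h => hr1 (by nlinarith [sq_nonneg (r - 1)])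
  have hexp : (1 : ℝ) - 3 / 2 = -(1 / 2) := by norm_num
  have hP : ∀ s, HasDerivAt (fun s => -(4 / (r ^ 2 - 1)) * (s / 2 + 1) - 4)
      (-(2 / (r ^ 2 - 1))) s := fun s =>
    ((((hasDerivAt_id s).div_const 2).add_const 1).const_mul _).sub_const 4
      |>.congr_deriv (by simp; ring)
  have hlim : Tendsto (fun s => (-(4 / (r ^ 2 - 1)) * (s / 2 + 1) - 4) *
      schwingerQuad (r ^ 2) s ^ (1 - (3 : ℝ) / 2)) atTop (𝓝 (-(4 / (r ^ 2 - 1)))) := by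
    rw [hexp]
    have h := ((schwingerQuad.tendsto_mul_rpow_neg_half (r ^ 2)).const_mul
      (-(4 / (r ^ 2 - 1)))).sub ((schwingerQuad.tendsto_rpow_neg_half (r ^ 2)).const_mul 4)
    rw [mul_one, mul_zero, sub_zero] at h
    exact h.congr fun s => by ring
  obtain ⟨hint, hval⟩ := integral_div_schwingerQuad_rpow_of_antideriv (pow_pos hr 2) hP
    (fun s => by unfold schwingerQuad; field_simp; ring) hlim
  refine ⟨hint, hval.trans ?_⟩
  rw [hexp, show (-(1 / 2) : ℝ) = -((1 : ℕ) / 2) by norm_num,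
    sq_rpow_neg_natCast_div_two hr.le]
  field_simp
  ring

theorem integral_div_schwingerQuad_rpow_seven_halves {r : ℝ} (hr : 0 < r) (hr1 : r ≠ 1) :
    IntegrableOn (fun s => s / schwingerQuad (r ^ 2) s ^ ((7 : ℝ) / 2)) (Ioi 0) ∧
      ∫ s in Ioi 0, s / schwingerQuad (r ^ 2) s ^ ((7 : ℝ) / 2)
        = 4 * (3 * r + 1) / (15 * r ^ 3 * (r + 1) ^ 3) := by
  have hc : r ^ 2 - 1 ≠ 0 := fun h => hr1 (by nlinarith [sq_nonneg (r - 1)])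
  set c := r ^ 2 - 1
  set Q := schwingerQuad (r ^ 2)
  have hexp : (1 : ℝ) - 7 / 2 = -(1 / 2) * (5 : ℕ) := by norm_num
  have hP : ∀ s, HasDerivAt (fun s => -(4 / 5) - 4 / (5 * c) * (s / 2 + 1)
        - 16 / (15 * c ^ 2) * ((s / 2 + 1) * Q s)
        - 32 / (15 * c ^ 3) * ((s / 2 + 1) * Q s ^ 2))
      (-(2 / (5 * c)) - 16 / (15 * c ^ 2) * (Q s / 2 + (s / 2 + 1) ^ 2)
        - 32 / (15 * c ^ 3) * (Q s ^ 2 / 2 + 2 * (s / 2 + 1) ^ 2 * Q s)) s := by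
    intro s
    have ht : HasDerivAt (fun s => s / 2 + 1) (1 / 2) s :=
      ((hasDerivAt_id s).div_const 2).add_const 1 |>.congr_deriv (by simp)
    have hQ : HasDerivAt Q (s / 2 + 1) s := schwingerQuad.hasDerivAt _ _
    exact ((((hasDerivAt_const s (-(4 / 5) : ℝ)).sub (ht.const_mul _)).sub
      ((ht.mul hQ).const_mul _)).sub ((ht.mul (hQ.pow 2)).const_mul _)).congr_deriv
      (by simp only [Nat.cast_ofNat, Pi.pow_apply]; ring)
  have hlim : Tendsto (fun s => (-(4 / 5) - 4 / (5 * c) * (s / 2 + 1)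
        - 16 / (15 * c ^ 2) * ((s / 2 + 1) * Q s)
        - 32 / (15 * c ^ 3) * ((s / 2 + 1) * Q s ^ 2)) * Q s ^ (1 - (7 : ℝ) / 2))
      atTop (𝓝 (-(32 / (15 * c ^ 3)))) := by
    -- in terms of `u = Q^{-1/2} → 0` and `v = (s/2 + 1) u → 1`, using `Q u² = 1`
    have hu : Tendsto (fun s => Q s ^ (-(1 / 2) : ℝ)) atTop (𝓝 0) :=
      schwingerQuad.tendsto_rpow_neg_half _
    have hv : Tendsto (fun s => (s / 2 + 1) * Q s ^ (-(1 / 2) : ℝ)) atTop (𝓝 1) :=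
      schwingerQuad.tendsto_mul_rpow_neg_half _
    have h := ((((hu.pow 5).const_mul (-(4 / 5))).sub
      ((hv.mul (hu.pow 4)).const_mul (4 / (5 * c)))).sub
      ((hv.mul (hu.pow 2)).const_mul (16 / (15 * c ^ 2)))).sub (hv.const_mul (32 / (15 * c ^ 3)))
    norm_num at h
    refine h.congr' ?_
    filter_upwards [(schwingerQuad.tendsto_atTop (r ^ 2)).eventually_gt_atTop 0] with s hQ
    have hQu : Q s * (Q s ^ (-(1 / 2) : ℝ)) ^ 2 = 1 := schwingerQuad.mul_rpow_neg_half_sq hQ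
    rw [hexp, rpow_mul_natCast hQ.le]
    linear_combination (16 / (15 * c ^ 2) * ((s / 2 + 1) * Q s ^ (-(1 / 2) : ℝ))
        * (Q s ^ (-(1 / 2) : ℝ)) ^ 2
      + 32 / (15 * c ^ 3) * ((s / 2 + 1) * Q s ^ (-(1 / 2) : ℝ))
        * (Q s * (Q s ^ (-(1 / 2) : ℝ)) ^ 2 + 1)) * hQu
  obtain ⟨hint, hval⟩ := integral_div_schwingerQuad_rpow_of_antideriv (pow_pos hr 2) hP
    (fun s => by simp only [Q, schwingerQuad]; field_simp; ring) hlim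
  refine ⟨hint, hval.trans ?_⟩
  rw [show (1 : ℝ) - 7 / 2 = -((5 : ℕ) / 2) by norm_num, sq_rpow_neg_natCast_div_two hr.le]
  simp only [Q, schwingerQuad, c] at hc ⊢
  have : r + 1 ≠ 0 := by positivity
  field_simp
  ring

theorem integral_integral_swap_of_nonneg {α β : Type*} [MeasurableSpace α] [MeasurableSpace β]
    {μ : Measure α} {ν : Measure β} [SFinite μ] [SFinite ν] {f : α → β → ℝ}
    (hf : AEStronglyMeasurable (Function.uncurry f) (μ.prod ν))
    (hf0 : ∀ᵐ y ∂ν, ∀ᵐ x ∂μ, 0 ≤ f x y) (hslice : ∀ᵐ y ∂ν, Integrable (fun x => f x y) μ)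
    (hint : Integrable (fun y => ∫ x, f x y ∂μ) ν) :
    ∫ x, ∫ y, f x y ∂ν ∂μ = ∫ y, ∫ x, f x y ∂μ ∂ν := by
  refine integral_integral_swap ((integrable_prod_iff' hf).2 ⟨hslice, hint.congr ?_⟩)
  filter_upwards [hf0] with y hy
  exact integral_congr_ae (by filter_upwards [hy] with x hx using (Real.norm_of_nonneg hx).symm)

lemma volume_restrict_setOf_forall_pos (ι : Type*) [Fintype ι] :
    (volume : Measure (ι → ℝ)).restrict {s | ∀ i, 0 < s i}
      = Measure.pi fun _ => volume.restrict (Ioi 0) := by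
  rw [show {s : ι → ℝ | ∀ i, 0 < s i} = univ.pi fun _ => Ioi 0 by ext; simp, volume_pi,
    Measure.restrict_pi_pi]

theorem integral_orthant_integral_mul_prod {ι : Type*} [Fintype ι] {w : ℝ → ℝ}
    {g : ι → ℝ → ℝ → ℝ} (hw : Measurable w) (hg : ∀ i, Measurable (Function.uncurry (g i)))
    (hw0 : ∀ y ∈ Ioi 0, 0 ≤ w y) (hg0 : ∀ i, ∀ y ∈ Ioi 0, ∀ s ∈ Ioi 0, 0 ≤ g i y s)
    (hslice : ∀ᵐ y ∂volume.restrict (Ioi 0), ∀ i, IntegrableOn (g i y) (Ioi 0))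
    (hint : IntegrableOn (fun y => w y * ∏ i, ∫ s in Ioi 0, g i y s) (Ioi 0)) :
    ∫ s in {s : ι → ℝ | ∀ i, 0 < s i}, ∫ y in Ioi 0, w y * ∏ i, g i y (s i)
      = ∫ y in Ioi 0, w y * ∏ i, ∫ s in Ioi 0, g i y s := by
  have hfactor : ∀ y, ∫ s, w y * ∏ i, g i y (s i) ∂Measure.pi (fun _ => volume.restrict (Ioi 0))
      = w y * ∏ i, ∫ s in Ioi 0, g i y s := fun y => by
    rw [integral_const_mul, integral_fintype_prod_eq_prod]
  rw [volume_restrict_setOf_forall_pos, integral_integral_swap_of_nonneg]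
  · exact integral_congr_ae (ae_of_all _ hfactor)
  · exact (hw.comp measurable_snd).mul (Finset.measurable_prod _ fun i _ =>
      (hg i).comp (measurable_snd.prodMk ((measurable_pi_apply i).comp measurable_fst)))
      |>.aestronglyMeasurable
  · filter_upwards [ae_restrict_mem measurableSet_Ioi] with y hy
    have hs : ∀ᵐ s ∂Measure.pi (fun _ : ι => volume.restrict (Ioi (0 : ℝ))), ∀ i, s i ∈ Ioi 0 :=
      ae_all_iff.2 fun i =>
        Measure.tendsto_eval_ae_ae.eventually (ae_restrict_mem measurableSet_Ioi)
    filter_upwards [hs] with s hs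
    exact mul_nonneg (hw0 y hy) (Finset.prod_nonneg fun i _ => hg0 i y hy (s i) (hs i))
  · filter_upwards [hslice] with y hy
    exact (Integrable.fintype_prod hy).const_mul _
  · exact hint.congr (ae_of_all _ fun y => (hfactor y).symm)

theorem integral_Ioi_rational_weight :
    IntegrableOn (fun y : ℝ => y * (3 * y + 1) ^ 2 / (y + 1) ^ 8) (Ioi 0) ∧
      ∫ y in Ioi (0 : ℝ), y * (3 * y + 1) ^ 2 / (y + 1) ^ 8 = 61 / 420 := by
  -- partial fractions in `u = y + 1`: `y (3y + 1)² = 9u³ - 21u² + 16u - 4`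
  let H : ℝ → ℝ := fun y =>
    -(9 / 4) * ((y + 1) ^ 4)⁻¹ + 21 / 5 * ((y + 1) ^ 5)⁻¹ - 8 / 3 * ((y + 1) ^ 6)⁻¹
      + 4 / 7 * ((y + 1) ^ 7)⁻¹
  have hderiv : ∀ y ∈ Ici (0 : ℝ), HasDerivAt H (y * (3 * y + 1) ^ 2 / (y + 1) ^ 8) y := by
    intro y hy
    have hy1 : y + 1 ≠ 0 := by have : (0 : ℝ) ≤ y := hy; positivity
    have hp : ∀ n : ℕ, HasDerivAt (fun y : ℝ => ((y + 1) ^ n)⁻¹)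
        (-(n * (y + 1) ^ (n - 1) * 1) / ((y + 1) ^ n) ^ 2) y :=
      fun n => (((hasDerivAt_id y).add_const 1).pow n).inv (pow_ne_zero n hy1)
    refine ((((hp 4).const_mul _).add ((hp 5).const_mul _)).sub ((hp 6).const_mul _)).add
      ((hp 7).const_mul _) |>.congr_deriv ?_
    field_simp
    ring
  have hnonneg : ∀ y ∈ Ioi (0 : ℝ), 0 ≤ y * (3 * y + 1) ^ 2 / (y + 1) ^ 8 := fun y hy => by
    have : (0 : ℝ) ≤ y := le_of_lt hy; positivity
  have hlim : Tendsto H atTop (𝓝 0) := by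
    have hp : ∀ n : ℕ, n ≠ 0 → Tendsto (fun y : ℝ => ((y + 1) ^ n)⁻¹) atTop (𝓝 0) :=
      fun n hn => ((tendsto_pow_atTop hn).comp
        (tendsto_atTop_add_const_right _ 1 tendsto_id)).inv_tendsto_atTop
    simpa [H] using ((((hp 4 (by norm_num)).const_mul (-(9 / 4) : ℝ)).add
      ((hp 5 (by norm_num)).const_mul (21 / 5))).sub ((hp 6 (by norm_num)).const_mul (8 / 3))).add
      ((hp 7 (by norm_num)).const_mul (4 / 7))
  refine ⟨integrableOn_Ioi_deriv_of_nonneg' hderiv hnonneg hlim, ?_⟩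
  rw [integral_Ioi_of_hasDerivAt_of_nonneg' hderiv hnonneg hlim]
  norm_num [H]

noncomputable def alphaOneExponent : Fin 4 → ℝ := ![7 / 2, 3 / 2, 7 / 2, 3 / 2]

lemma alphaOne_inner_integral_eq (s : Fin 4 → ℝ) :
    (∏ i, s i) *
        ∫ x in Set.Ioi (0 : ℝ),
          x ^ 3 /
            (((1 / 4) * (s 0) ^ 2 + s 0 + x) ^ ((7 : ℝ) / 2) *
              ((1 / 4) * (s 2) ^ 2 + s 2 + x) ^ ((7 : ℝ) / 2) *
              ((1 / 4) * (s 1) ^ 2 + s 1 + x) ^ ((3 : ℝ) / 2) *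
              ((1 / 4) * (s 3) ^ 2 + s 3 + x) ^ ((3 : ℝ) / 2))
      = ∫ y in Ioi 0, 2 * y ^ 7 * ∏ i, s i / schwingerQuad (y ^ 2) (s i) ^ alphaOneExponent i := by
  rw [← integral_const_mul, ← integral_comp_rpow_Ioi_of_pos two_pos]
  refine setIntegral_congr_fun measurableSet_Ioi fun y _ => ?_
  simp only [rpow_two, alphaOneExponent, Fin.prod_univ_four, Matrix.cons_val, schwingerQuad,
    smul_eq_mul]
  norm_num
  ring

lemma alphaOne_weight_eq {y : ℝ} (hy : 0 < y) (hy1 : y ≠ 1) :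
    2 * y ^ 7 * ∏ i, ∫ s in Ioi 0, s / schwingerQuad (y ^ 2) s ^ alphaOneExponent i
      = 512 / 225 * (y * (3 * y + 1) ^ 2 / (y + 1) ^ 8) := by
  simp only [alphaOneExponent, Fin.prod_univ_four, Matrix.cons_val]
  norm_num [(integral_div_schwingerQuad_rpow_seven_halves hy hy1).2,
    (integral_div_schwingerQuad_rpow_three_halves hy hy1).2]
  field_simp
  ring

theorem alphaOne_integral_eq :
    ∫ s in {s : Fin 4 → ℝ | ∀ i, 0 < s i},
        (∏ i, s i) *
          ∫ x in Set.Ioi (0 : ℝ),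
            x ^ 3 /
              (((1 / 4) * (s 0) ^ 2 + s 0 + x) ^ ((7 : ℝ) / 2) *
                ((1 / 4) * (s 2) ^ 2 + s 2 + x) ^ ((7 : ℝ) / 2) *
                ((1 / 4) * (s 1) ^ 2 + s 1 + x) ^ ((3 : ℝ) / 2) *
                ((1 / 4) * (s 3) ^ 2 + s 3 + x) ^ ((3 : ℝ) / 2))
      = 7808 / 23625 := by
  -- the closed forms of the one-dimensional integrals degenerate at the null point `y = 1`
  have hae : ∀ᵐ y ∂volume.restrict (Ioi (0 : ℝ)), 0 < y ∧ y ≠ 1 := by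
    filter_upwards [ae_restrict_mem measurableSet_Ioi, Measure.ae_ne _ 1] with y hy hy1
    exact ⟨hy, hy1⟩
  have hweight : (fun y => 2 * y ^ 7 * ∏ i, ∫ s in Ioi 0,
        s / schwingerQuad (y ^ 2) s ^ alphaOneExponent i)
      =ᵐ[volume.restrict (Ioi 0)] fun y => 512 / 225 * (y * (3 * y + 1) ^ 2 / (y + 1) ^ 8) := by
    filter_upwards [hae] with y ⟨hy, hy1⟩ using alphaOne_weight_eq hy hy1
  have hslice : ∀ᵐ y ∂volume.restrict (Ioi (0 : ℝ)), ∀ i,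
      IntegrableOn (fun s => s / schwingerQuad (y ^ 2) s ^ alphaOneExponent i) (Ioi 0) := by
    filter_upwards [hae] with y ⟨hy, hy1⟩
    have h7 := (integral_div_schwingerQuad_rpow_seven_halves hy hy1).1
    have h3 := (integral_div_schwingerQuad_rpow_three_halves hy hy1).1
    intro i; fin_cases i <;> simpa [alphaOneExponent]
  simp_rw [alphaOne_inner_integral_eq]
  rw [integral_orthant_integral_mul_prod (by fun_prop)
      (fun i => by unfold schwingerQuad; fun_prop)
      (fun y hy => by have : (0 : ℝ) < y := hy; positivity)
      (fun i y hy s hs => div_nonneg (le_of_lt hs)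
        (rpow_nonneg (schwingerQuad.pos (pow_pos hy 2) (le_of_lt hs)).le _))
      hslice ((integral_Ioi_rational_weight.1.const_mul _).congr hweight.symm),
    integral_congr_ae hweight, integral_const_mul, integral_Ioi_rational_weight.2]
  norm_num

lemma Gamma_seven_halves : Gamma (7 / 2) = 15 * √π / 8 := by
  have h := Gamma_nat_add_half 3
  norm_num [Nat.doubleFactorial] at h
  exact h

lemma Gamma_three_halves : Gamma (3 / 2) = √π / 2 := by
  have h := Gamma_nat_add_half 1
  norm_num [Nat.doubleFactorial] at h
  exact h

/-- After Schwinger parametrization, the five-fold integral form of `α₁`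
equals `61/(645120 π²)`.  The exponents `7/2` apply to `s₁, s₃` and `3/2` to
`s₂, s₄` (indices `0,2` and `1,3` in `Fin 4`). -/
theorem alpha_one_schwinger_value :
    (1 / (2 * (4 * π) ^ 4)) *
        (Real.Gamma (7 / 2) ^ 2 * Real.Gamma (3 / 2) ^ 2 / Real.Gamma 4) *
        ∫ s in {s : Fin 4 → ℝ | ∀ i, 0 < s i},
          (∏ i, s i) *
            ∫ x in Set.Ioi (0 : ℝ),
              x ^ 3 /
                (((1 / 4) * (s 0) ^ 2 + s 0 + x) ^ ((7 : ℝ) / 2) *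
                  ((1 / 4) * (s 2) ^ 2 + s 2 + x) ^ ((7 : ℝ) / 2) *
                  ((1 / 4) * (s 1) ^ 2 + s 1 + x) ^ ((3 : ℝ) / 2) *
                  ((1 / 4) * (s 3) ^ 2 + s 3 + x) ^ ((3 : ℝ) / 2))
      = 61 / (645120 * π ^ 2) := by
  have hGamma4 : Gamma 4 = 6 := by
    rw [show (4 : ℝ) = (3 : ℕ) + 1 by norm_num, Gamma_nat_eq_factorial]
    norm_num [Nat.factorial]
  rw [alphaOne_integral_eq, Gamma_seven_halves, Gamma_three_halves, hGamma4]
  simp only [div_pow, mul_pow, sq_sqrt pi_pos.le]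
  field_simp
  ring
end
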